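/- There exists a constant C > 0 such that for every α > 0 and every x ∈ ℝ² with 0 < |x| ≤ α/2: |K^α(x) + (1/(4π)) (1/α²) x^⊥ log(|x|/α)| ≤ C |x|/α². In other words, as |x|/α → 0, K^α(x) = -(1/(4π))(1/α²) x^⊥ log(|x|/α) + O(|x|/α²). -/

import Mathlib

/-! With `s = |x|/α`, the left-hand side is `|x^⊥|/(2π|x|α)` times
`|1/s - K₁(s) + (s/2) log s|`, so it suffices to show that this bracket is `O(s)` for
`0 < s ≤ 1`. Expand `√(t²-1) = t - 1/(2t) - ρ(t)` with `0 ≤ ρ(t) ≤ t⁻³/2` in the integral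
defining `K₁`: the term `t` contributes `s ∫₁^∞ e^{-st} t dt = e^{-s}(1+s)/s = 1/s + O(s)`;
the term `1/(2t)` contributes `(s/2) E₁(s)`, and `E₁(s) = -log s + O(1)` (compare `e^{-st}/t`
with `1/t` on `[1, 1/s]` and with `s e^{-st}` beyond); the remainder `ρ` is integrable
uniformly in `s`. -/

noncomputable section

open Real MeasureTheory Filter Set intervalIntegral Classical

abbrev E2 := EuclideanSpace ℝ (Fin 2)

/-- The modified Bessel function of the second kind of order one,
`K₁(r) = r ∫_{1}^{∞} e^{-rt} (t²-1)^{1/2} dt`. -/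
def besselK1 (r : ℝ) : ℝ := r * ∫ t in Set.Ioi (1:ℝ), Real.exp (-r * t) * (t ^ 2 - 1) ^ ((1:ℝ)/2)

/-- `DΨ^α(r) = (1/(2π)) (1/r - (1/α) K₁(r/α))`. -/
def DPsi (α r : ℝ) : ℝ := (1 / (2 * π)) * (1 / r - (1 / α) * besselK1 (r / α))

/-- `(x₁, x₂)^⊥ = (-x₂, x₁)`. -/
def perp (x : E2) : E2 := (WithLp.equiv 2 (Fin 2 → ℝ)).symm ![-(x 1), x 0]

/-- The smoothed Birkhoff–Rott kernel `K^α(x) = (x^⊥/|x|) DΨ^α(|x|)`, `K^α(0) = 0`. -/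
def Kalpha (α : ℝ) (x : E2) : E2 := if x = 0 then 0 else (DPsi α ‖x‖ / ‖x‖) • perp x

open Topology

lemma sqrt_sq_sub_one_le {t : ℝ} (ht : 1 ≤ t) : √(t ^ 2 - 1) ≤ t - 1 / (2 * t) := by
  have ht0 : 0 < t := by linarith
  rw [Real.sqrt_le_iff]
  constructor
  · rw [sub_nonneg, div_le_iff₀ (by positivity)]
    nlinarith
  · have hsq : (t - 1 / (2 * t)) ^ 2 = t ^ 2 - 1 + 1 / (4 * t ^ 2) := by field_simp; ring
    rw [hsq]
    linarith [show 0 < 1 / (4 * t ^ 2) by positivity]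

lemma sub_le_sqrt_sq_sub_one {t : ℝ} (ht : 1 ≤ t) :
    t - 1 / (2 * t) - t ^ (-3 : ℝ) / 2 ≤ √(t ^ 2 - 1) := by
  have ht0 : 0 < t := by linarith
  rw [show (-3 : ℝ) = ((-3 : ℤ) : ℝ) by norm_num, Real.rpow_intCast, zpow_neg, zpow_ofNat]
  rcases le_total (t - 1 / (2 * t) - (t ^ 3)⁻¹ / 2) 0 with h | h
  · exact h.trans (Real.sqrt_nonneg _)
  · apply Real.le_sqrt_of_sq_le
    have hv0 : 0 < (t ^ 2)⁻¹ := by positivity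
    have hv1 : (t ^ 2)⁻¹ ≤ 1 := inv_le_one_of_one_le₀ (by nlinarith)
    have key : (1 - (t ^ 2)⁻¹ / 2 - (t ^ 2)⁻¹ ^ 2 / 2) ^ 2 ≤ 1 - (t ^ 2)⁻¹ := by
      nlinarith [mul_nonneg (pow_pos hv0 2).le
        (mul_nonneg (sub_nonneg.2 hv1) (by linarith : 0 ≤ (t ^ 2)⁻¹ + 3))]
    calc (t - 1 / (2 * t) - (t ^ 3)⁻¹ / 2) ^ 2
        = t ^ 2 * (1 - (t ^ 2)⁻¹ / 2 - (t ^ 2)⁻¹ ^ 2 / 2) ^ 2 := by field_simp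
      _ ≤ t ^ 2 * (1 - (t ^ 2)⁻¹) := mul_le_mul_of_nonneg_left key (by positivity)
      _ = t ^ 2 - 1 := by field_simp

section BesselK1

variable {s : ℝ}

lemma hasDerivAt_exp_neg_mul_antideriv_mul_self (hs : 0 < s) (t : ℝ) :
    HasDerivAt (fun t => -(exp (-s * t) * (t / s + 1 / s ^ 2))) (exp (-s * t) * t) t := by
  refine ((((hasDerivAt_id' t).const_mul (-s)).exp).mul
    (((hasDerivAt_id' t).div_const s).add_const (1 / s ^ 2))).neg.congr_deriv ?_
  field_simp
  ring

lemma tendsto_exp_neg_mul_antideriv_mul_self (hs : 0 < s) :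
    Tendsto (fun t => -(exp (-s * t) * (t / s + 1 / s ^ 2))) atTop (𝓝 0) := by
  have hst : Tendsto (fun t => s * t) atTop atTop := tendsto_id.const_mul_atTop hs
  have h1 : Tendsto (fun t => s * t * exp (-(s * t))) atTop (𝓝 0) :=
    (by simpa using tendsto_pow_mul_exp_neg_atTop_nhds_zero 1 :
      Tendsto (fun u : ℝ => u * exp (-u)) atTop (𝓝 0)).comp hst
  have h2 : Tendsto (fun t => exp (-(s * t))) atTop (𝓝 0) :=
    tendsto_exp_neg_atTop_nhds_zero.comp hst
  convert ((h1.add h2).const_mul (1 / s ^ 2)).neg using 2 with t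
  · field_simp
  · simp

lemma integral_exp_neg_mul_mul_self_Ioi_one (hs : 0 < s) :
    ∫ t in Ioi (1 : ℝ), exp (-s * t) * t = exp (-s) * (1 / s + 1 / s ^ 2) := by
  rw [integral_Ioi_of_hasDerivAt_of_nonneg'
    (fun t _ => hasDerivAt_exp_neg_mul_antideriv_mul_self hs t)
    (fun t ht => by have : (0 : ℝ) < t := lt_trans one_pos ht; positivity)
    (tendsto_exp_neg_mul_antideriv_mul_self hs)]
  simp

lemma integrableOn_exp_neg_mul_div_self (hs : 0 < s) {a : ℝ} (ha : 0 < a) :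
    IntegrableOn (fun t => exp (-s * t) / t) (Ioi a) := by
  refine ((exp_neg_integrableOn_Ioi a hs).div_const a).mono' ?_ ?_
  · exact (ContinuousOn.div (by fun_prop) continuousOn_id
      fun t ht => (ha.trans ht).ne').aestronglyMeasurable measurableSet_Ioi
  · filter_upwards [ae_restrict_mem measurableSet_Ioi] with t ht
    have ht0 : 0 < t := ha.trans ht
    rw [norm_div, norm_of_nonneg (exp_pos _).le, norm_of_nonneg ht0.le]
    exact div_le_div_of_nonneg_left (exp_pos _).le ha ht.le

lemma abs_exp_neg_mul_div_sub_inv_le (hs : 0 ≤ s) {t : ℝ} (ht : 0 < t) :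
    |exp (-s * t) / t - t⁻¹| ≤ s := by
  have hle : exp (-s * t) ≤ 1 := exp_le_one_iff.2 (by nlinarith)
  have hge : 1 - s * t ≤ exp (-s * t) := by linarith [add_one_le_exp (-s * t)]
  have heq : exp (-s * t) / t - t⁻¹ = -((1 - exp (-s * t)) / t) := by field_simp; ring
  rw [heq, abs_neg, abs_of_nonneg (div_nonneg (by linarith) ht.le), div_le_iff₀ ht]
  linarith

lemma abs_integral_exp_neg_mul_div_self_add_log_le (hs : 0 < s) (hs1 : s ≤ 1) :
    |(∫ t in Ioi (1 : ℝ), exp (-s * t) / t) + log s| ≤ 2 := by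
  set b := s⁻¹ with hb_def
  have hb : 1 ≤ b := one_le_inv₀ hs |>.2 hs1
  have hb0 : 0 < b := by positivity
  have hf := integrableOn_exp_neg_mul_div_self hs one_pos
  have hf_near : IntervalIntegrable (fun t => exp (-s * t) / t) volume 1 b :=
    (intervalIntegrable_iff_integrableOn_Ioc_of_le hb).2 (hf.mono_set Ioc_subset_Ioi_self)
  have hinv : IntervalIntegrable (fun t : ℝ => t⁻¹) volume 1 b :=
    intervalIntegrable_inv_iff.2 (Or.inr fun h => by
      rw [uIcc_of_le hb] at h; exact absurd h.1 (by norm_num))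
  have hlog : log s = -∫ t in (1 : ℝ)..b, t⁻¹ := by
    rw [integral_inv_of_pos one_pos hb0, div_one, hb_def, log_inv, neg_neg]
  have hnear : |∫ t in (1 : ℝ)..b, (exp (-s * t) / t - t⁻¹)| ≤ 1 := by
    refine (intervalIntegral.norm_integral_le_of_norm_le_const (C := s)
      (f := fun t => exp (-s * t) / t - t⁻¹) fun t ht =>
      abs_exp_neg_mul_div_sub_inv_le hs.le (one_pos.trans (uIoc_of_le hb ▸ ht).1)).trans ?_
    rw [abs_of_nonneg (by linarith), mul_sub, hb_def, mul_inv_cancel₀ hs.ne']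
    linarith
  have htail_nonneg : 0 ≤ ∫ t in Ioi b, exp (-s * t) / t :=
    setIntegral_nonneg measurableSet_Ioi fun t ht => by
      have : 0 < t := hb0.trans ht
      positivity
  have htail_le : ∫ t in Ioi b, exp (-s * t) / t ≤ 1 := by
    calc ∫ t in Ioi b, exp (-s * t) / t ≤ ∫ t in Ioi b, s * exp (-s * t) := by
          refine setIntegral_mono_on (hf.mono_set (Ioi_subset_Ioi hb))
            ((exp_neg_integrableOn_Ioi b hs).const_mul s) measurableSet_Ioi fun t ht => ?_
          rw [div_le_iff₀ (hb0.trans ht), mul_comm s, mul_assoc]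
          refine le_mul_of_one_le_right (exp_pos _).le ?_
          rw [hb_def, Set.mem_Ioi, inv_lt_iff_one_lt_mul₀ hs] at ht
          linarith
      _ = exp (-1) := by
          rw [MeasureTheory.integral_const_mul, integral_exp_mul_Ioi (neg_lt_zero.2 hs), hb_def]
          field_simp
      _ ≤ 1 := exp_le_one_iff.2 (by norm_num)
  rw [← integral_interval_add_Ioi hf (hf.mono_set (Ioi_subset_Ioi hb)), hlog,
    add_right_comm, ← sub_eq_add_neg, ← integral_sub hf_near hinv]
  calc _ ≤ |∫ t in (1 : ℝ)..b, (exp (-s * t) / t - t⁻¹)|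
        + |∫ t in Ioi b, exp (-s * t) / t| := abs_add_le _ _
    _ ≤ 2 := by rw [abs_of_nonneg htail_nonneg]; linarith

lemma norm_exp_neg_mul_mul_sqrt_remainder_le (hs : 0 ≤ s) {t : ℝ} (ht : 1 ≤ t) :
    ‖exp (-s * t) * (t - 1 / (2 * t) - √(t ^ 2 - 1))‖ ≤ t ^ (-3 : ℝ) / 2 := by
  have hrem_nonneg : 0 ≤ t - 1 / (2 * t) - √(t ^ 2 - 1) := sub_nonneg.2 (sqrt_sq_sub_one_le ht)
  have hrem_le : t - 1 / (2 * t) - √(t ^ 2 - 1) ≤ t ^ (-3 : ℝ) / 2 := by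
    linarith [sub_le_sqrt_sq_sub_one ht]
  rw [norm_mul, norm_of_nonneg (exp_pos _).le, norm_of_nonneg hrem_nonneg]
  exact (mul_le_of_le_one_left hrem_nonneg (exp_le_one_iff.2 (by nlinarith))).trans hrem_le

lemma integrableOn_exp_neg_mul_mul_sqrt_remainder (hs : 0 ≤ s) :
    IntegrableOn (fun t => exp (-s * t) * (t - 1 / (2 * t) - √(t ^ 2 - 1))) (Ioi 1) := by
  refine ((integrableOn_Ioi_rpow_of_lt (by norm_num : (-3 : ℝ) < -1) one_pos).div_const 2).mono'
    ?_ ?_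
  · exact (ContinuousOn.mul (by fun_prop) (ContinuousOn.sub (ContinuousOn.sub continuousOn_id
      (continuousOn_const.div (by fun_prop) fun t ht => by simp; linarith [ht.out]))
      (by fun_prop))).aestronglyMeasurable measurableSet_Ioi
  · filter_upwards [ae_restrict_mem measurableSet_Ioi] with t ht
    exact norm_exp_neg_mul_mul_sqrt_remainder_le hs (le_of_lt ht)

lemma abs_integral_exp_neg_mul_mul_sqrt_remainder_le (hs : 0 ≤ s) :
    |∫ t in Ioi (1 : ℝ), exp (-s * t) * (t - 1 / (2 * t) - √(t ^ 2 - 1))| ≤ 1 / 4 := by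
  have hbound := norm_integral_le_of_norm_le
    ((integrableOn_Ioi_rpow_of_lt (by norm_num : (-3 : ℝ) < -1) one_pos).div_const 2)
    ((ae_restrict_mem measurableSet_Ioi).mono fun t ht =>
      norm_exp_neg_mul_mul_sqrt_remainder_le hs (le_of_lt ht))
  rw [MeasureTheory.integral_div, integral_Ioi_rpow_of_lt (by norm_num) one_pos] at hbound
  rw [← Real.norm_eq_abs]
  convert hbound using 1
  norm_num [Real.one_rpow]

lemma besselK1_eq (hs : 0 < s) :
    besselK1 s = s * ((∫ t in Ioi (1 : ℝ), exp (-s * t) * t)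
      - (∫ t in Ioi (1 : ℝ), exp (-s * t) / t) / 2
      - ∫ t in Ioi (1 : ℝ), exp (-s * t) * (t - 1 / (2 * t) - √(t ^ 2 - 1))) := by
  have hlin : IntegrableOn (fun t => exp (-s * t) * t) (Ioi 1) :=
    integrableOn_Ioi_deriv_of_nonneg' (fun t _ => hasDerivAt_exp_neg_mul_antideriv_mul_self hs t)
      (fun t ht => by have : (0 : ℝ) < t := one_pos.trans ht; positivity)
      (tendsto_exp_neg_mul_antideriv_mul_self hs)
  have hinv := (integrableOn_exp_neg_mul_div_self hs one_pos).div_const 2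
  have hrem := integrableOn_exp_neg_mul_mul_sqrt_remainder hs.le
  rw [besselK1]
  congr 1
  calc ∫ t in Ioi (1 : ℝ), exp (-s * t) * (t ^ 2 - 1) ^ ((1 : ℝ) / 2)
      = ∫ t in Ioi (1 : ℝ), (exp (-s * t) * t - exp (-s * t) / t / 2
          - exp (-s * t) * (t - 1 / (2 * t) - √(t ^ 2 - 1))) := by
        refine setIntegral_congr_fun measurableSet_Ioi fun t ht => ?_
        have ht0 : t ≠ 0 := (one_pos.trans ht).ne'
        simp only [← sqrt_eq_rpow]
        field_simp
        ring
    _ = _ := by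
        rw [integral_sub (f := fun t => exp (-s * t) * t - exp (-s * t) / t / 2)
          (hlin.sub hinv) hrem, integral_sub hlin hinv, MeasureTheory.integral_div]

theorem abs_inv_sub_besselK1_add_mul_log_le (hs : 0 < s) (hs1 : s ≤ 1) :
    |1 / s - besselK1 s + s / 2 * log s| ≤ 3 * s := by
  have hlin : |1 / s - s * ∫ t in Ioi (1 : ℝ), exp (-s * t) * t| ≤ s := by
    have h1 : 1 - exp (-s) * (1 + s) ≤ s ^ 2 := by
      nlinarith [add_one_le_exp (-s), exp_pos (-s)]
    have h2 : 0 ≤ 1 - exp (-s) * (1 + s) := by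
      have : exp (-s) * exp s = 1 := by rw [← exp_add]; simp
      nlinarith [add_one_le_exp s, exp_pos (-s), exp_pos s]
    rw [integral_exp_neg_mul_mul_self_Ioi_one hs,
      show 1 / s - s * (exp (-s) * (1 / s + 1 / s ^ 2)) = (1 - exp (-s) * (1 + s)) / s by
        field_simp; ring,
      abs_div, abs_of_pos hs, abs_of_nonneg h2, div_le_iff₀ hs]
    nlinarith
  have hlog := abs_integral_exp_neg_mul_div_self_add_log_le hs hs1
  have hrem := abs_integral_exp_neg_mul_mul_sqrt_remainder_le hs.le
  rw [besselK1_eq hs]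
  set A := ∫ t in Ioi (1 : ℝ), exp (-s * t) * t
  set B := ∫ t in Ioi (1 : ℝ), exp (-s * t) / t
  set H := ∫ t in Ioi (1 : ℝ), exp (-s * t) * (t - 1 / (2 * t) - √(t ^ 2 - 1))
  calc |1 / s - s * (A - B / 2 - H) + s / 2 * log s|
      = |(1 / s - s * A) + s / 2 * (B + log s) + s * H| := by ring_nf
    _ ≤ |1 / s - s * A| + s / 2 * |B + log s| + s * |H| := by
        refine (abs_add_three _ _ _).trans_eq ?_
        rw [abs_mul, abs_mul, abs_of_pos hs, abs_of_pos (half_pos hs)]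
    _ ≤ 3 * s := by nlinarith

end BesselK1

lemma norm_perp (x : E2) : ‖perp x‖ = ‖x‖ := by
  simp only [EuclideanSpace.norm_eq, perp, Fin.sum_univ_two]
  simp [add_comm]

lemma Kalpha_add_smul_perp_eq {α : ℝ} (hα : α ≠ 0) {x : E2} (hx : x ≠ 0) :
    Kalpha α x + ((1 / (4 * π)) * (1 / α ^ 2) * log (‖x‖ / α)) • perp x =
      ((1 / (2 * π * ‖x‖ * α)) * (1 / (‖x‖ / α) - besselK1 (‖x‖ / α)
        + ‖x‖ / α / 2 * log (‖x‖ / α))) • perp x := by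
  have hr : ‖x‖ ≠ 0 := norm_ne_zero_iff.2 hx
  rw [Kalpha, if_neg hx, ← add_smul, DPsi]
  congr 1
  field_simp
  ring

/-- Near the origin, `K^α(x) = -(1/(4π))(1/α²) x^⊥ log(|x|/α) + O(|x|/α²)`:
there is a constant `C > 0`, independent of `α`, such that for `0 < |x| ≤ α/2`,
`|K^α(x) + (1/(4πα²)) log(|x|/α) x^⊥| ≤ C|x|/α²`. -/
theorem Kalpha_asymptotics_near_origin :
    ∃ C : ℝ, 0 < C ∧ ∀ α : ℝ, 0 < α → ∀ x : E2, 0 < ‖x‖ → ‖x‖ ≤ α / 2 →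
      ‖Kalpha α x + ((1 / (4 * π)) * (1 / α ^ 2) * Real.log (‖x‖ / α)) • perp x‖ ≤
        C * ‖x‖ / α ^ 2 := by
  refine ⟨1, one_pos, fun α hα x hx hxα => ?_⟩
  have hs : 0 < ‖x‖ / α := div_pos hx hα
  have hs1 : ‖x‖ / α ≤ 1 := (div_le_one hα).2 (by linarith)
  have hbessel := abs_inv_sub_besselK1_add_mul_log_le hs hs1
  rw [Kalpha_add_smul_perp_eq hα.ne' (norm_pos_iff.1 hx), norm_smul, norm_perp, norm_mul,
    norm_of_nonneg (by positivity), Real.norm_eq_abs]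
  calc 1 / (2 * π * ‖x‖ * α) * |1 / (‖x‖ / α) - besselK1 (‖x‖ / α)
        + ‖x‖ / α / 2 * log (‖x‖ / α)| * ‖x‖
      ≤ 1 / (2 * π * ‖x‖ * α) * (3 * (‖x‖ / α)) * ‖x‖ := by gcongr
    _ = 3 / (2 * π) * (‖x‖ / α ^ 2) := by field_simp
    _ ≤ 1 * ‖x‖ / α ^ 2 := by
        rw [one_mul]
        exact mul_le_of_le_one_left (by positivity)
          ((div_le_one (by positivity)).2 (by linarith [pi_gt_three]))
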